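/- Let n ≥ 5 be an integer. Then I₂(ℓ) / ( V(ℓ) )^{(n−4)/n} → −∞ as ℓ → ∞; here V(ℓ) > 0 for every ℓ > 0, so the real power is well defined. (Geometrically, this says that for the conformal metrics g_ℓ = e^{−2ℓs²} g_{S^n} on the round sphere, the quotient ∫ σ₂(g_ℓ) dvol(g_ℓ) / vol(g_ℓ)^{(n−4)/n} tends to −∞, so without the positive scalar curvature constraint the σ₂-Yamabe functional is unbounded below on the conformal class of the round sphere.) -/

import Mathlib

/-!
Write `Mₖ = ∫_{-1}^{1} s^{2k} e^{-bs²} (1-s²)^q ds` with `b = (n-4)ℓ`, `q = (n-2)/2`. The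
integrand of `I₂` is this weight times a polynomial of degree 4 in `s²`, and integrating
`d/ds [e^{-bs²} s^{2m+1} (1-s²)^{q+1}]` gives a three-term recurrence for the `Mₖ`, which reduces
`2(n-4) I₂` to `(n-1)(c₀M₀ + c₁M₁ + c₂M₂)` with `c₀ = -ℓ² + O(ℓ)` and `c₁, c₂ = O(ℓ²)`. The
weight lives on `|s| ≲ ℓ^{-1/2}`, so `M₀ ≳ ℓ^{-1/2}` while `M₁, M₂ ≲ ℓ^{-1}`: hence
`I₂ ≲ Cℓ - cℓ^{3/2} → -∞`.
Since `0 < V ≤ 2` and `0 ≤ (n-4)/n ≤ 1`, dividing by `V^{(n-4)/n}` keeps the limit.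
-/

open Real Filter

/-- First eigenvalue of the Schouten tensor of `g_ℓ = e^{−2ℓs²} g_{S^n}` w.r.t. `g_{S^n}`. -/
noncomputable def lam1 (ℓ s : ℝ) : ℝ :=
  1 / 2 + 2 * ℓ - 4 * ℓ * s ^ 2 + 2 * ℓ ^ 2 * s ^ 2 * (1 - s ^ 2)

/-- Second eigenvalue (of multiplicity `n − 1`). -/
noncomputable def lam2 (ℓ s : ℝ) : ℝ :=
  1 / 2 - 2 * ℓ * s ^ 2 - 2 * ℓ ^ 2 * s ^ 2 * (1 - s ^ 2)

/-- Total σ₂-curvature integral `I₂(ℓ)` (up to the factor `ω_{n−1}`). -/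
noncomputable def I2 (n : ℕ) (ℓ : ℝ) : ℝ :=
  ∫ s in (-1 : ℝ)..1,
    Real.exp (-((n : ℝ) - 4) * ℓ * s ^ 2) * (1 - s ^ 2) ^ (((n : ℝ) - 2) / 2) *
      ((n - 1) * lam1 ℓ s * lam2 ℓ s + ((n - 1) * (n - 2) / 2) * (lam2 ℓ s) ^ 2)

/-- Volume integral `V(ℓ)` (up to the factor `ω_{n−1}`). -/
noncomputable def V (n : ℕ) (ℓ : ℝ) : ℝ :=
  ∫ s in (-1 : ℝ)..1,
    Real.exp (-(n : ℝ) * ℓ * s ^ 2) * (1 - s ^ 2) ^ (((n : ℝ) - 2) / 2)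

open MeasureTheory intervalIntegral Set

noncomputable def sphereWeight (b q s : ℝ) : ℝ :=
  exp (-b * s ^ 2) * (1 - s ^ 2) ^ q

noncomputable def sphereMoment (b q : ℝ) (k : ℕ) : ℝ :=
  ∫ s in (-1 : ℝ)..1, s ^ (2 * k) * sphereWeight b q s

section SphereMoment

variable {b q s : ℝ}

theorem sq_le_one_of_mem_uIcc (hs : s ∈ uIcc (-1 : ℝ) 1) : s ^ 2 ≤ 1 := by
  rw [uIcc_of_le (by norm_num)] at hs
  nlinarith [hs.1, hs.2]

theorem continuous_sphereWeight (hq : 0 ≤ q) : Continuous (sphereWeight b q) :=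
  (by fun_prop : Continuous fun s => exp (-b * s ^ 2)).mul
    ((continuous_rpow_const hq).comp (by fun_prop))

theorem sphereWeight_nonneg (b q : ℝ) (hs : s ^ 2 ≤ 1) : 0 ≤ sphereWeight b q s :=
  mul_nonneg (exp_nonneg _) (rpow_nonneg (by linarith) _)

theorem sphereWeight_pos (b q : ℝ) (hs : s ^ 2 < 1) : 0 < sphereWeight b q s :=
  mul_pos (exp_pos _) (rpow_pos_of_pos (by linarith) _)

theorem sphereWeight_le_sphereWeight_of_sq_le (hb : 0 ≤ b) (hq : 0 ≤ q) {r : ℝ}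
    (hsr : s ^ 2 ≤ r ^ 2) (hr : r ^ 2 ≤ 1) : sphereWeight b q r ≤ sphereWeight b q s :=
  mul_le_mul (exp_le_exp.2 (by nlinarith)) (rpow_le_rpow (by linarith) (by linarith) hq)
    (rpow_nonneg (by linarith) _) (exp_nonneg _)

theorem sphereWeight_le_one (hb : 0 ≤ b) (hq : 0 ≤ q) (hs : s ^ 2 ≤ 1) :
    sphereWeight b q s ≤ 1 := by
  simpa [sphereWeight] using sphereWeight_le_sphereWeight_of_sq_le (s := 0) hb hq (by nlinarith) hs

theorem intervalIntegrable_pow_mul_sphereWeight (hq : 0 ≤ q) (k : ℕ) :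
    IntervalIntegrable (fun s => s ^ k * sphereWeight b q s) volume (-1) 1 :=
  ((continuous_pow k).mul (continuous_sphereWeight hq)).intervalIntegrable _ _

theorem integral_sum_mul_sphereWeight (hq : 0 ≤ q) {ι : Type*} (t : Finset ι) (c : ι → ℝ)
    (k : ι → ℕ) :
    ∫ s in (-1 : ℝ)..1, (∑ i ∈ t, c i * s ^ (2 * k i)) * sphereWeight b q s =
      ∑ i ∈ t, c i * sphereMoment b q (k i) := by
  simp_rw [Finset.sum_mul, mul_assoc]
  rw [integral_finsetSum fun i _ => (intervalIntegrable_pow_mul_sphereWeight hq _).const_mul (c i)]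
  simp_rw [intervalIntegral.integral_const_mul, sphereMoment]

theorem sphereMoment_nonneg (b q : ℝ) (k : ℕ) : 0 ≤ sphereMoment b q k :=
  integral_nonneg (by norm_num) fun s hs =>
    mul_nonneg (by rw [pow_mul]; positivity) (sphereWeight_nonneg b q (sq_le_one_of_mem_uIcc
      (Icc_subset_uIcc hs)))

theorem sphereMoment_succ_le (hq : 0 ≤ q) (k : ℕ) : sphereMoment b q (k + 1) ≤ sphereMoment b q k :=
  integral_mono_on (by norm_num) (intervalIntegrable_pow_mul_sphereWeight hq _)
    (intervalIntegrable_pow_mul_sphereWeight hq _) fun s hs => by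
      have hs2 := sq_le_one_of_mem_uIcc (Icc_subset_uIcc hs)
      refine mul_le_mul_of_nonneg_right ?_ (sphereWeight_nonneg b q hs2)
      rw [pow_mul, pow_mul]
      exact pow_le_pow_of_le_one (sq_nonneg s) hs2 (by omega)

theorem sphereMoment_zero_pos (b : ℝ) (hq : 0 ≤ q) : 0 < sphereMoment b q 0 := by
  refine intervalIntegral_pos_of_pos_on (intervalIntegrable_pow_mul_sphereWeight hq _)
    (fun s hs => ?_) (by norm_num)
  simpa using sphereWeight_pos b q (s := s) (by nlinarith [hs.1, hs.2])

theorem sphereMoment_zero_le_two (hb : 0 ≤ b) (hq : 0 ≤ q) : sphereMoment b q 0 ≤ 2 := by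
  calc sphereMoment b q 0 ≤ ∫ _ in (-1 : ℝ)..1, (1 : ℝ) :=
        integral_mono_on (by norm_num) (intervalIntegrable_pow_mul_sphereWeight hq _)
          intervalIntegrable_const fun s hs => by
            simpa using sphereWeight_le_one hb hq (sq_le_one_of_mem_uIcc (Icc_subset_uIcc hs))
    _ = 2 := by norm_num

theorem sphereMoment_one_le (hb : 0 < b) (hq : 0 ≤ q) : sphereMoment b q 1 ≤ 1 / b := by
  calc sphereMoment b q 1 ≤ ∫ _ in (-1 : ℝ)..1, 1 / (2 * b) :=
        integral_mono_on (by norm_num) (intervalIntegrable_pow_mul_sphereWeight hq _)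
          intervalIntegrable_const fun s hs => ?_
    _ = 1 / b := by rw [intervalIntegral.integral_const, smul_eq_mul]; field_simp; norm_num
  have hs2 := sq_le_one_of_mem_uIcc (Icc_subset_uIcc hs)
  -- `y e^{-y} ≤ e^{-1} < 1/2` at `y = b s²`
  have hmax : b * s ^ 2 * exp (-(b * s ^ 2)) ≤ 1 / 2 :=
    (mul_exp_neg_le_exp_neg_one _).trans <| by
      rw [exp_neg, inv_le_comm₀ (exp_pos 1) (by norm_num)]; linarith [exp_one_gt_two]
  have hr : (1 - s ^ 2) ^ q ≤ 1 := rpow_le_one (by linarith) (by nlinarith) hq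
  rw [le_div_iff₀ (by positivity)]
  calc s ^ (2 * 1) * sphereWeight b q s * (2 * b)
      = 2 * (b * s ^ 2 * exp (-(b * s ^ 2))) * (1 - s ^ 2) ^ q := by
        rw [sphereWeight, neg_mul]; ring
    _ ≤ 2 * (1 / 2) * 1 := by gcongr
    _ = 1 := by norm_num

theorem le_sphereMoment_zero (hb : 0 ≤ b) (hq : 0 ≤ q) {r : ℝ} (hr0 : 0 ≤ r) (hr1 : r ≤ 1) :
    2 * r * sphereWeight b q r ≤ sphereMoment b q 0 := by
  have hr2 : r ^ 2 ≤ 1 := by nlinarith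
  calc 2 * r * sphereWeight b q r = ∫ _ in -r..r, sphereWeight b q r := by simp [two_mul]
    _ ≤ ∫ s in -r..r, s ^ (2 * 0) * sphereWeight b q s :=
        integral_mono_on (by linarith) intervalIntegrable_const
          ((intervalIntegrable_pow_mul_sphereWeight hq 0).mono_set (by
            rw [uIcc_of_le (by linarith), uIcc_of_le (by norm_num)]
            exact Icc_subset_Icc (by linarith) hr1)) fun s hs => by
          simpa using sphereWeight_le_sphereWeight_of_sq_le hb hq (sq_le_sq' hs.1 hs.2) hr2
    _ ≤ sphereMoment b q 0 :=
        integral_mono_interval (by linarith) (by linarith) hr1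
          (ae_restrict_of_forall_mem measurableSet_Ioc fun s hs => by
            simpa using sphereWeight_nonneg b q (s := s) (by nlinarith [hs.1, hs.2]))
          (intervalIntegrable_pow_mul_sphereWeight hq 0)

theorem sphereMoment_recurrence (hq : 0 ≤ q) (m : ℕ) :
    (2 * m + 1) * sphereMoment b q m - (2 * m + 2 * q + 3 + 2 * b) * sphereMoment b q (m + 1)
      + 2 * b * sphereMoment b q (m + 2) = 0 := by
  set c : Fin 3 → ℝ := ![2 * m + 1, -(2 * m + 2 * q + 3 + 2 * b), 2 * b]
  set k : Fin 3 → ℕ := ![m, m + 1, m + 2]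
  set F : ℝ → ℝ := fun s => exp (-b * s ^ 2) * s ^ (2 * m + 1) * (1 - s ^ 2) ^ (q + 1)
  have hderiv : ∀ s ∈ uIcc (-1 : ℝ) 1,
      HasDerivAt F ((∑ i, c i * s ^ (2 * k i)) * sphereWeight b q s) s := by
    intro s hs
    have hexp : HasDerivAt (fun s => exp (-b * s ^ 2)) (exp (-b * s ^ 2) * (-b * (2 * s))) s := by
      simpa using ((hasDerivAt_pow 2 s).const_mul (-b)).exp
    have hpow : HasDerivAt (fun s : ℝ => s ^ (2 * m + 1)) ((2 * m + 1) * s ^ (2 * m)) s := by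
      simpa using hasDerivAt_pow (2 * m + 1) s
    have hrpow : HasDerivAt (fun s : ℝ => (1 - s ^ 2) ^ (q + 1))
        ((q + 1) * (1 - s ^ 2) ^ q * -(2 * s)) s := by
      simpa [Function.comp_def] using (hasDerivAt_rpow_const (x := 1 - s ^ 2) (p := q + 1)
        (Or.inr (by linarith))).comp s ((hasDerivAt_pow 2 s).const_sub 1)
    refine ((hexp.mul hpow).mul hrpow).congr_deriv ?_
    rw [sphereWeight, rpow_add_one' (by linarith [sq_le_one_of_mem_uIcc hs]) (by linarith)]
    simp only [c, k, Fin.sum_univ_three, Matrix.cons_val, Pi.mul_apply]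
    ring
  have hF : F 1 - F (-1) = 0 := by simp [F, zero_rpow (by linarith : q + 1 ≠ 0)]
  rw [← hF, ← integral_eq_sub_of_hasDerivAt hderiv
    (((continuous_finsetSum _ fun i _ => by fun_prop).mul
      (continuous_sphereWeight hq)).intervalIntegrable _ _), integral_sum_mul_sphereWeight hq]
  simp only [c, k, Fin.sum_univ_three, Matrix.cons_val]
  ring

end SphereMoment

theorem le_sq_mul_sphereMoment_zero {a q ℓ : ℝ} (ha : 0 ≤ a) (hq : 0 ≤ q) (hℓ : 2 ≤ ℓ) :
    2 * (exp (-a) * (1 / 2) ^ q) * (ℓ * √ℓ) ≤ ℓ ^ 2 * sphereMoment (a * ℓ) q 0 := by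
  have hℓ0 : 0 < ℓ := by linarith
  have hsqrt : 0 < √ℓ := sqrt_pos.2 hℓ0
  have hr2 : (1 / √ℓ) ^ 2 = 1 / ℓ := by rw [div_pow, sq_sqrt hℓ0.le, one_pow]
  have hr1 : 1 / √ℓ ≤ 1 := (div_le_one hsqrt).2 (one_le_sqrt.2 (by linarith))
  have hweight : exp (-a) * (1 / 2) ^ q ≤ sphereWeight (a * ℓ) q (1 / √ℓ) := by
    rw [sphereWeight, hr2, show -(a * ℓ) * (1 / ℓ) = -a by field_simp]
    gcongr
    rw [le_sub_comm, one_div_le (by positivity) (by norm_num)]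
    linarith
  calc 2 * (exp (-a) * (1 / 2) ^ q) * (ℓ * √ℓ)
      = ℓ ^ 2 * (2 * (1 / √ℓ) * (exp (-a) * (1 / 2) ^ q)) := by
        field_simp; rw [sq_sqrt hℓ0.le]
    _ ≤ ℓ ^ 2 * sphereMoment (a * ℓ) q 0 := by
        gcongr
        exact (mul_le_mul_of_nonneg_left hweight (by positivity)).trans
          (le_sphereMoment_zero (by positivity) hq (by positivity) hr1)

theorem V_eq_sphereMoment (n : ℕ) (ℓ : ℝ) : V n ℓ = sphereMoment (n * ℓ) ((n - 2) / 2) 0 := by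
  simp only [V, sphereMoment, sphereWeight, mul_zero, pow_zero, one_mul, neg_mul]

theorem two_mul_I2_eq {n : ℕ} (hn : 2 ≤ n) (ℓ : ℝ) :
    2 * ((n : ℝ) - 4) * I2 n ℓ = ((n : ℝ) - 1) *
      (((n - 4) * n / 4 + 2 * (n - 4) * ℓ - ℓ ^ 2) * sphereMoment ((n - 4) * ℓ) ((n - 2) / 2) 0
        - (2 * (n + 1) * (n - 4) * ℓ + 2 * (n ^ 2 - 7 * n + 5) * ℓ ^ 2)
          * sphereMoment ((n - 4) * ℓ) ((n - 2) / 2) 1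
        + (3 * n ^ 2 - 20 * n + 11) * ℓ ^ 2 * sphereMoment ((n - 4) * ℓ) ((n - 2) / 2) 2) := by
  have hq : (0 : ℝ) ≤ ((n : ℝ) - 2) / 2 := by
    have : (2 : ℝ) ≤ n := by exact_mod_cast hn
    linarith
  set c : Fin 5 → ℝ := ![(n - 1) * (n / 8 + ℓ),
    (n - 1) * (-(n + 1) * ℓ - (n + 2) * ℓ ^ 2 - 4 * ℓ ^ 3),
    (n - 1) * ((3 * n + 2) * ℓ ^ 2 + 4 * n * ℓ ^ 3 + 2 * (n - 4) * ℓ ^ 4),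
    (n - 1) * (-4 * (n - 1) * ℓ ^ 3 - 4 * (n - 4) * ℓ ^ 4), (n - 1) * (2 * (n - 4) * ℓ ^ 4)]
  have hexpand :
      I2 n ℓ = ∑ i, c i * sphereMoment ((n - 4) * ℓ) ((n - 2) / 2) (![0, 1, 2, 3, 4] i) := by
    rw [← integral_sum_mul_sphereWeight hq]
    refine integral_congr fun s _ => ?_
    simp only [c, Fin.sum_univ_five, Matrix.cons_val, sphereWeight, lam1, lam2]
    rw [show -(((n : ℝ) - 4) * ℓ) * s ^ 2 = -((n : ℝ) - 4) * ℓ * s ^ 2 by ring]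
    push_cast
    ring
  have h0 := sphereMoment_recurrence (b := ((n : ℝ) - 4) * ℓ) hq 0
  have h1 := sphereMoment_recurrence (b := ((n : ℝ) - 4) * ℓ) hq 1
  have h2 := sphereMoment_recurrence (b := ((n : ℝ) - 4) * ℓ) hq 2
  simp only [Fin.sum_univ_five, c, Matrix.cons_val] at hexpand
  push_cast at h0 h1 h2
  linear_combination (2 * ((n : ℝ) - 4)) * hexpand + ((n : ℝ) - 1) * (ℓ ^ 2 * h0
    - (3 * ((n : ℝ) - 3) * ℓ ^ 2 + 2 * ((n : ℝ) - 4) * ℓ ^ 3) * h1 + 2 * ((n : ℝ) - 4) * ℓ ^ 3 * h2)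

theorem mul_le_of_le_mul_sq_of_le_inv {c C ℓ M : ℝ} (hC : 0 ≤ C) (hℓ : 0 < ℓ) (hc : c ≤ C * ℓ ^ 2)
    (hM0 : 0 ≤ M) (hM : M ≤ 1 / ℓ) : c * M ≤ C * ℓ :=
  calc c * M ≤ C * ℓ ^ 2 * (1 / ℓ) :=
        (mul_le_mul_of_nonneg_right hc hM0).trans (by gcongr)
    _ = C * ℓ := by field_simp

theorem two_mul_I2_le {n : ℕ} (hn : 5 ≤ n) {ℓ : ℝ} (hℓ : 2 ≤ ℓ) :
    2 * ((n : ℝ) - 4) * I2 n ℓ ≤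
      ((n : ℝ) - 1) * (7 * n ^ 2 * ℓ - ℓ ^ 2 * sphereMoment ((n - 4) * ℓ) ((n - 2) / 2) 0) := by
  have hn5 : (5 : ℝ) ≤ n := by exact_mod_cast hn
  have hℓ0 : 0 < ℓ := by linarith
  have hq : (0 : ℝ) ≤ ((n : ℝ) - 2) / 2 := by linarith
  have hb : ℓ ≤ ((n : ℝ) - 4) * ℓ := by nlinarith
  rw [two_mul_I2_eq (by omega)]
  set M := sphereMoment (((n : ℝ) - 4) * ℓ) (((n : ℝ) - 2) / 2)
  have hM0 : M 0 ≤ 2 := sphereMoment_zero_le_two (by linarith) hq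
  have hM1 : M 1 ≤ 1 / ℓ :=
    (sphereMoment_one_le (by linarith) hq).trans (one_div_le_one_div_of_le hℓ0 hb)
  have hM2 : M 2 ≤ 1 / ℓ := (sphereMoment_succ_le hq 1).trans hM1
  have h1 : -(2 * (n + 1) * (n - 4) * ℓ + 2 * (n ^ 2 - 7 * n + 5) * ℓ ^ 2) * M 1 ≤ 14 * n * ℓ :=
    mul_le_of_le_mul_sq_of_le_inv (by positivity) hℓ0 (by nlinarith) (sphereMoment_nonneg _ _ 1) hM1
  have h2 : (3 * n ^ 2 - 20 * n + 11) * ℓ ^ 2 * M 2 ≤ 3 * n ^ 2 * ℓ :=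
    mul_le_of_le_mul_sq_of_le_inv (by positivity) hℓ0 (by nlinarith) (sphereMoment_nonneg _ _ 2) hM2
  have h0 : ((n - 4) * n / 4 + 2 * (n - 4) * ℓ) * M 0 ≤ ((n - 4) * n / 4 + 2 * (n - 4) * ℓ) * 2 :=
    mul_le_mul_of_nonneg_left hM0 (by nlinarith)
  gcongr ((n : ℝ) - 1) * ?_
  · linarith
  nlinarith [mul_le_mul_of_nonneg_left hℓ (by positivity : (0 : ℝ) ≤ n ^ 2)]

theorem tendsto_mul_sub_mul_mul_sqrt_atBot (α : ℝ) {β : ℝ} (hβ : 0 < β) :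
    Tendsto (fun x => α * x - β * (x * √x)) atTop atBot := by
  have h : Tendsto (fun x => α - β * √x) atTop atBot :=
    tendsto_atBot_add_const_left _ α
      (tendsto_neg_atTop_atBot.comp (tendsto_sqrt_atTop.const_mul_atTop hβ))
  exact (tendsto_id.atTop_mul_atBot₀ h).congr fun x => by rw [id_eq]; ring

theorem tendsto_I2_atBot {n : ℕ} (hn : 5 ≤ n) : Tendsto (I2 n) atTop atBot := by
  have hn5 : (5 : ℝ) ≤ n := by exact_mod_cast hn
  set K := exp (-((n : ℝ) - 4)) * (1 / 2) ^ (((n : ℝ) - 2) / 2)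
  rw [← tendsto_const_mul_atBot_of_pos (by linarith : (0 : ℝ) < 2 * (n - 4))]
  refine tendsto_atBot_mono' _ ((eventually_ge_atTop 2).mono fun ℓ hℓ => ?_)
    (tendsto_mul_sub_mul_mul_sqrt_atBot ((n - 1) * (7 * n ^ 2)) (β := (n - 1) * (2 * K))
      (mul_pos (by linarith) (by positivity)))
  have hM := le_sq_mul_sphereMoment_zero (a := (n : ℝ) - 4) (q := ((n : ℝ) - 2) / 2) (by linarith)
    (by linarith) hℓ
  have := two_mul_I2_le hn hℓ
  nlinarith

theorem Filter.Tendsto.div_atBot_of_pos_of_le {α : Type*} {l : Filter α} {f g : α → ℝ} {C : ℝ}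
    (hf : Tendsto f l atBot) (hC : 0 < C) (hg : ∀ᶠ x in l, 0 < g x ∧ g x ≤ C) :
    Tendsto (fun x => f x / g x) l atBot := by
  refine tendsto_atBot_mono' _ ?_ (hf.atBot_div_const hC)
  filter_upwards [hg, hf.eventually (eventually_le_atBot 0)] with x ⟨hg0, hgC⟩ hf0
  rw [div_le_div_iff₀ hg0 hC]
  nlinarith

/-- For `n ≥ 5`, `V(ℓ) > 0` for every `ℓ > 0`, and
`I₂(ℓ) / V(ℓ)^{(n−4)/n} → −∞` as `ℓ → ∞`. -/
theorem stmt13 (n : ℕ) (hn : 5 ≤ n) :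
    (∀ ℓ : ℝ, 0 < ℓ → 0 < V n ℓ) ∧
      Tendsto (fun ℓ : ℝ => I2 n ℓ / (V n ℓ) ^ (((n : ℝ) - 4) / (n : ℝ)))
        atTop atBot := by
  have hn5 : (5 : ℝ) ≤ n := by exact_mod_cast hn
  have hq : (0 : ℝ) ≤ ((n : ℝ) - 2) / 2 := by linarith
  have hp : ((n : ℝ) - 4) / n ∈ Icc 0 1 :=
    ⟨div_nonneg (by linarith) (by positivity), (div_le_one (by linarith)).2 (by linarith)⟩
  refine ⟨fun ℓ _ => V_eq_sphereMoment n ℓ ▸ sphereMoment_zero_pos _ hq,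
    (tendsto_I2_atBot hn).div_atBot_of_pos_of_le two_pos
      ((eventually_ge_atTop 0).mono fun ℓ hℓ => ?_)⟩
  rw [V_eq_sphereMoment]
  have hV := sphereMoment_zero_pos ((n : ℝ) * ℓ) hq
  refine ⟨rpow_pos_of_pos hV _, ?_⟩
  calc sphereMoment ((n : ℝ) * ℓ) (((n : ℝ) - 2) / 2) 0 ^ (((n : ℝ) - 4) / n)
      ≤ 2 ^ (((n : ℝ) - 4) / n) :=
        rpow_le_rpow hV.le (sphereMoment_zero_le_two (by positivity) hq) hp.1
    _ ≤ 2 ^ (1 : ℝ) := rpow_le_rpow_of_exponent_le one_le_two hp.2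
    _ = 2 := rpow_one 2
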